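/- For every l ∈ ℕ, let X^{(l+1)} := f_l(X^{(l)}) with an arbitrary initial value X^{(0)} ∈ ℝ^{N×C}, and set s := sup_{l} s_l. Then d_𝓜(X^{(l)}) ≤ (sλ)^l · d_𝓜(X^{(0)}) for all l; in particular, if sλ < 1 then d_𝓜(X^{(l)}) converges to 0 exponentially in l for every initial value X^{(0)}. -/

import Mathlib

open scoped Matrix
open Filter

set_option synthInstance.maxHeartbeats 1000000
set_option maxHeartbeats 1000000

noncomputable section

attribute [local instance] Matrix.frobeniusNormedAddCommGroup

/-- Entrywise ReLU on `N × C` real matrices. -/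
def relu {N C : ℕ} (X : Matrix (Fin N) (Fin C) ℝ) : Matrix (Fin N) (Fin C) ℝ :=
  Matrix.of fun n c => max (X n c) 0

/-- `mlp [W₁, …, W_H] Y = σ(⋯σ(σ(Y)W₁)W₂⋯W_H)` : a multi-layer perceptron with entrywise
ReLU activations, applied row-wise to `Y ∈ ℝ^{N×C}`. -/
def mlp {N C : ℕ} (Ws : List (Matrix (Fin C) (Fin C) ℝ)) (Y : Matrix (Fin N) (Fin C) ℝ) :
    Matrix (Fin N) (Fin C) ℝ :=
  Ws.foldl (fun Z Wh => relu (Z * Wh)) (relu Y)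

/-- The largest singular value of a square real matrix, i.e. the operator `2`-norm. -/
def maxSingularValue {C : ℕ} (W : Matrix (Fin C) (Fin C) ℝ) : ℝ :=
  ‖LinearMap.toContinuousLinearMap (Matrix.toEuclideanLin W)‖

/-- The subspace `𝓜 = {Σ_m e_m ⊗ w_m | w_m ∈ ℝ^C}` of `ℝ^{N×C}`. -/
def Mspace {N C M : ℕ} (e : Fin M → EuclideanSpace ℝ (Fin N)) :
    Set (Matrix (Fin N) (Fin C) ℝ) :=
  {X | ∃ w : Fin M → Fin C → ℝ, X = ∑ m, Matrix.vecMulVec (e m) (w m)}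

/-- Frobenius distance from `X` to the subspace `𝓜`. -/
def dM {N C M : ℕ} (e : Fin M → EuclideanSpace ℝ (Fin N))
    (X : Matrix (Fin N) (Fin C) ℝ) : ℝ :=
  Metric.infDist X (Mspace e)

namespace DMaux


variable {N C : ℕ}

/-- Identity map into `EuclideanSpace`, to pin down norm instances. -/
def euc {D : ℕ} (v : Fin D → ℝ) : EuclideanSpace ℝ (Fin D) := WithLp.toLp 2 v

/-- Sum of squares of the entries. -/
def F2 (X : Matrix (Fin N) (Fin C) ℝ) : ℝ := ∑ n, ∑ c, (X n c) ^ 2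

lemma le_infDist_of {α : Type*} [PseudoMetricSpace α] {x : α} {s : Set α} (hs : s.Nonempty)
    {b : ℝ} (h : ∀ y ∈ s, b ≤ dist x y) : b ≤ Metric.infDist x s := by
  rw [Metric.infDist, ← ENNReal.ofReal_le_iff_le_toReal (Metric.infEdist_ne_top hs),
    EMetric.le_infEdist]
  intro y hy
  rw [edist_dist]
  exact ENNReal.ofReal_le_ofReal (h y hy)

lemma F2_nonneg (X : Matrix (Fin N) (Fin C) ℝ) : 0 ≤ F2 X :=
  Finset.sum_nonneg fun _ _ => Finset.sum_nonneg fun _ _ => sq_nonneg _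

lemma norm_eq_sqrt_F2 (X : Matrix (Fin N) (Fin C) ℝ) : ‖X‖ = Real.sqrt (F2 X) := by
  rw [Matrix.frobenius_norm_def, Real.sqrt_eq_rpow]
  congr 1
  refine Finset.sum_congr rfl fun n _ => Finset.sum_congr rfl fun c _ => ?_
  rw [Real.rpow_two, Real.norm_eq_abs, sq_abs]

/-- `c`-th column of `X`, as a Euclidean vector. -/
def col (X : Matrix (Fin N) (Fin C) ℝ) (c : Fin C) : EuclideanSpace ℝ (Fin N) :=
  WithLp.toLp 2 (fun n => X n c)

lemma norm_euc_sq {n : ℕ} (x : EuclideanSpace ℝ (Fin n)) : ‖x‖ ^ 2 = ∑ i, (x i) ^ 2 := by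
  rw [EuclideanSpace.norm_eq, Real.sq_sqrt (Finset.sum_nonneg fun _ _ => sq_nonneg _)]
  · exact Finset.sum_congr rfl fun i _ => by rw [Real.norm_eq_abs, sq_abs]

/-- `n`-th row of `X`, as a Euclidean vector. -/
def row (X : Matrix (Fin N) (Fin C) ℝ) (n : Fin N) : EuclideanSpace ℝ (Fin C) :=
  WithLp.toLp 2 (fun c => X n c)

lemma F2_eq_sum_cols (X : Matrix (Fin N) (Fin C) ℝ) : F2 X = ∑ c, ‖col X c‖ ^ 2 := by
  unfold F2
  rw [Finset.sum_comm]
  exact Finset.sum_congr rfl fun c _ => (norm_euc_sq (col X c)).symm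

lemma F2_eq_sum_rows (X : Matrix (Fin N) (Fin C) ℝ) : F2 X = ∑ n, ‖row X n‖ ^ 2 :=
  Finset.sum_congr rfl fun n _ => (norm_euc_sq (row X n)).symm


section
variable {M : ℕ} {e : Fin M → EuclideanSpace ℝ (Fin N)}

lemma sum_smul_apply (w : Fin M → ℝ) (n : Fin N) :
    (∑ m, w m • e m) n = ∑ m, w m * e m n := by
  induction (Finset.univ : Finset (Fin M)) using Finset.induction with
  | empty => rfl
  | insert _ _ h ih =>
      rw [Finset.sum_insert h, Finset.sum_insert h, ← ih]
      rfl

lemma cols_of_mem {X : Matrix (Fin N) (Fin C) ℝ} (hX : X ∈ Mspace e) (c : Fin C) :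
    col X c ∈ Submodule.span ℝ (Set.range e) := by
  obtain ⟨w, rfl⟩ := hX
  have : col (∑ m, Matrix.vecMulVec (e m) (w m)) c = ∑ m, (w m c) • e m := by
    ext n
    rw [sum_smul_apply]
    simp [col, Matrix.sum_apply, Matrix.vecMulVec_apply, mul_comm]
  rw [this]
  exact Submodule.sum_mem _ fun m _ =>
    Submodule.smul_mem _ _ (Submodule.subset_span ⟨m, rfl⟩)

lemma mem_of_cols {X : Matrix (Fin N) (Fin C) ℝ}
    (h : ∀ c, col X c ∈ Submodule.span ℝ (Set.range e)) : X ∈ Mspace e := by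
  have h' : ∀ c, ∃ w : Fin M → ℝ, ∑ m, w m • e m = col X c := fun c =>
    (Submodule.mem_span_range_iff_exists_fun ℝ).mp (h c)
  choose w hw using h'
  refine ⟨fun m c => w c m, ?_⟩
  ext n c
  have := congrArg (fun v : EuclideanSpace ℝ (Fin N) => v n) (hw c)
  simp only [sum_smul_apply] at this
  have h2 : X n c = ∑ x, w c x * e x n := this.symm
  simp only [Matrix.sum_apply, Matrix.vecMulVec_apply]
  rw [h2]
  exact Finset.sum_congr rfl fun m _ => mul_comm _ _

lemma zero_mem : (0 : Matrix (Fin N) (Fin C) ℝ) ∈ Mspace e :=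
  ⟨0, by ext n c; simp [Matrix.sum_apply, Matrix.vecMulVec_apply]⟩

lemma Mspace_nonempty : (Mspace e : Set (Matrix (Fin N) (Fin C) ℝ)).Nonempty :=
  ⟨0, zero_mem⟩

lemma support_disjoint (he : Orthonormal ℝ e) (hnonneg : ∀ m i, 0 ≤ e m i)
    {m m' : Fin M} (hmm : m ≠ m') (n : Fin N) : e m n * e m' n = 0 := by
  have h0 : (inner ℝ (e m) (e m') : ℝ) = 0 := he.2 hmm
  rw [PiLp.inner_apply] at h0
  simp only [RCLike.inner_apply, starRingEnd_apply, star_trivial] at h0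
  have := (Finset.sum_eq_zero_iff_of_nonneg
    (fun i _ => mul_nonneg (hnonneg m' i) (hnonneg m i))).mp h0
  exact (mul_comm _ _).trans (this n (Finset.mem_univ n))

/-- column of a sum of rank-one matrices -/
lemma col_sum_vecMulVec (w : Fin M → Fin C → ℝ) (c : Fin C) :
    col (∑ m, Matrix.vecMulVec (e m) (w m)) c = ∑ m, (w m c) • e m := by
  ext n
  rw [sum_smul_apply]
  simp [col, Matrix.sum_apply, Matrix.vecMulVec_apply, mul_comm]

lemma relu_mem (he : Orthonormal ℝ e) (hnonneg : ∀ m i, 0 ≤ e m i)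
    {Y : Matrix (Fin N) (Fin C) ℝ} (hY : Y ∈ Mspace e) : relu Y ∈ Mspace e := by
  obtain ⟨w, rfl⟩ := hY
  refine ⟨fun m c => max (w m c) 0, ?_⟩
  ext n c
  simp only [relu, Matrix.of_apply, Matrix.sum_apply, Matrix.vecMulVec_apply]
  by_cases hex : ∃ m₀, e m₀ n ≠ 0
  · obtain ⟨m₀, hm₀⟩ := hex
    have hz : ∀ m, m ≠ m₀ → e m n = 0 := by
      intro m hm
      by_contra h
      rcases mul_eq_zero.mp (support_disjoint he hnonneg hm n) with h1 | h1
      exacts [h h1, hm₀ h1]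
    rw [Finset.sum_eq_single m₀ (fun m _ hm => by rw [hz m hm, zero_mul])
        (fun h => absurd (Finset.mem_univ m₀) h),
      Finset.sum_eq_single m₀ (fun m _ hm => by rw [hz m hm, zero_mul])
        (fun h => absurd (Finset.mem_univ m₀) h),
      mul_max_of_nonneg _ _ (hnonneg m₀ n), mul_zero]
  · push_neg at hex
    simp [hex]

lemma relu_lip (X Y : Matrix (Fin N) (Fin C) ℝ) : ‖relu X - relu Y‖ ≤ ‖X - Y‖ := by
  rw [norm_eq_sqrt_F2, norm_eq_sqrt_F2]
  apply Real.sqrt_le_sqrt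
  refine Finset.sum_le_sum fun n _ => Finset.sum_le_sum fun c _ => ?_
  have h1 : (relu X - relu Y) n c = max (X n c) 0 - max (Y n c) 0 := rfl
  have h2 : (X - Y) n c = X n c - Y n c := rfl
  rw [h1, h2, ← sq_abs (max (X n c) 0 - max (Y n c) 0), ← sq_abs (X n c - Y n c)]
  have := abs_max_sub_max_le_abs (X n c) (Y n c) 0
  exact pow_le_pow_left₀ (abs_nonneg _) this 2

/-- The orthogonal projection of `X` onto `Mspace e`. -/
def projM (e : Fin M → EuclideanSpace ℝ (Fin N)) (X : Matrix (Fin N) (Fin C) ℝ) :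
    Matrix (Fin N) (Fin C) ℝ :=
  ∑ m, Matrix.vecMulVec (e m) (fun c => (inner ℝ (e m) (col X c) : ℝ))

lemma projM_mem (X : Matrix (Fin N) (Fin C) ℝ) : projM e X ∈ Mspace e :=
  ⟨fun m c => (inner ℝ (e m) (col X c) : ℝ), rfl⟩

lemma sub_projM_orth (he : Orthonormal ℝ e) (X : Matrix (Fin N) (Fin C) ℝ) (c : Fin C) :
    col (X - projM e X) c ∈ (Submodule.span ℝ (Set.range e))ᗮ := by
  rw [Submodule.mem_orthogonal]
  intro u hu
  have hcol : col (X - projM e X) c = col X c - col (projM e X) c := rfl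
  have hproj : col (projM e X) c = ∑ m, (inner ℝ (e m) (col X c) : ℝ) • e m :=
    col_sum_vecMulVec _ c
  induction hu using Submodule.span_induction with
  | mem u hu =>
      obtain ⟨k, rfl⟩ := hu
      rw [hcol, inner_sub_right, hproj, he.inner_right_fintype, sub_self]
  | zero => rw [inner_zero_left]
  | add u v _ _ hu hv => rw [inner_add_left, hu, hv, add_zero]
  | smul a u _ hu => rw [inner_smul_left, hu, mul_zero]

lemma F2_add_of_orth {A B : Matrix (Fin N) (Fin C) ℝ}
    (h : ∀ c, (inner ℝ (col A c) (col B c) : ℝ) = 0) : F2 (A + B) = F2 A + F2 B := by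
  rw [F2_eq_sum_cols, F2_eq_sum_cols, F2_eq_sum_cols, ← Finset.sum_add_distrib]
  refine Finset.sum_congr rfl fun c _ => ?_
  have hcol : col (A + B) c = col A c + col B c := rfl
  rw [hcol, norm_add_sq_real, h c]
  ring

lemma mem_sub {Y Z : Matrix (Fin N) (Fin C) ℝ} (hY : Y ∈ Mspace e) (hZ : Z ∈ Mspace e) :
    Y - Z ∈ Mspace e := by
  refine mem_of_cols fun c => ?_
  have : col (Y - Z) c = col Y c - col Z c := rfl
  rw [this]
  exact Submodule.sub_mem _ (cols_of_mem hY c) (cols_of_mem hZ c)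

/-- The projection formula for the distance. -/
lemma dM_eq (he : Orthonormal ℝ e) (X : Matrix (Fin N) (Fin C) ℝ) :
    dM e X = ‖X - projM e X‖ := by
  refine le_antisymm ((Metric.infDist_le_dist_of_mem (projM_mem X)).trans_eq
    (dist_eq_norm _ _)) ?_
  refine le_infDist_of Mspace_nonempty fun Y hY => ?_
  rw [dist_eq_norm, norm_eq_sqrt_F2, norm_eq_sqrt_F2]
  apply Real.sqrt_le_sqrt
  have hdecomp : X - Y = (X - projM e X) + (projM e X - Y) := by abel
  have horth : ∀ c, (inner ℝ (col (X - projM e X) c) (col (projM e X - Y) c) : ℝ) = 0 := by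
    intro c
    have h1 := sub_projM_orth he X c
    have h2 : col (projM e X - Y) c ∈ Submodule.span ℝ (Set.range e) :=
      cols_of_mem (mem_sub (projM_mem X) hY) c
    exact (Submodule.mem_orthogonal' _ _).mp h1 _ h2
  rw [hdecomp, F2_add_of_orth horth]
  have := F2_nonneg (projM e X - Y)
  linarith

lemma inner_euc {D : ℕ} (v w : Fin D → ℝ) :
    (inner ℝ (euc v) (euc w) : ℝ) = dotProduct v w := by
  rw [PiLp.inner_apply]
  simp [euc, dotProduct, RCLike.inner_apply, mul_comm]

lemma mulVec_norm_le {D : ℕ} (W : Matrix (Fin D) (Fin D) ℝ) (x : EuclideanSpace ℝ (Fin D)) :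
    ‖euc (W.mulVec x)‖ ≤ maxSingularValue W * ‖x‖ := by
  have h := (LinearMap.toContinuousLinearMap (Matrix.toEuclideanLin W)).le_opNorm x
  simp only [LinearMap.coe_toContinuousLinearMap'] at h
  have hx : (Matrix.toEuclideanLin W) x = euc (W.mulVec x) := rfl
  rw [hx] at h
  exact h

lemma mulVec_transpose_norm_le {D : ℕ} (W : Matrix (Fin D) (Fin D) ℝ)
    (x : EuclideanSpace ℝ (Fin D)) :
    ‖euc (Wᵀ.mulVec x)‖ ≤ maxSingularValue W * ‖x‖ := by
  set y : EuclideanSpace ℝ (Fin D) := euc (Wᵀ.mulVec x) with hy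
  have hmsv : 0 ≤ maxSingularValue W := norm_nonneg _
  rcases eq_or_ne ‖y‖ 0 with h0 | h0
  · rw [h0]; positivity
  have key : (inner ℝ y y : ℝ) = (inner ℝ (euc (W.mulVec y)) (euc x) : ℝ) := by
    rw [hy, inner_euc, inner_euc]
    calc dotProduct (Wᵀ.mulVec x) (Wᵀ.mulVec x)
        = dotProduct (Matrix.vecMul (Wᵀ.mulVec x) Wᵀ) x :=
          Matrix.dotProduct_mulVec _ _ _
      _ = dotProduct (W.mulVec (Wᵀ.mulVec x)) x := by rw [Matrix.vecMul_transpose]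
  have hex : euc x = x := rfl
  have h1 : ‖y‖ ^ 2 ≤ (maxSingularValue W * ‖y‖) * ‖x‖ := by
    rw [← real_inner_self_eq_norm_sq, key, hex]
    exact (real_inner_le_norm _ _).trans
      (mul_le_mul_of_nonneg_right (mulVec_norm_le W y) (norm_nonneg x))
  have hypos : 0 < ‖y‖ := (norm_nonneg y).lt_of_ne (Ne.symm h0)
  nlinarith

lemma norm_mul_right_le (A : Matrix (Fin N) (Fin C) ℝ) (W : Matrix (Fin C) (Fin C) ℝ) :
    ‖A * W‖ ≤ maxSingularValue W * ‖A‖ := by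
  have hmsv : 0 ≤ maxSingularValue W := norm_nonneg _
  rw [norm_eq_sqrt_F2, norm_eq_sqrt_F2, F2_eq_sum_rows, F2_eq_sum_rows,
    ← Real.sqrt_sq hmsv, ← Real.sqrt_mul (sq_nonneg _), Finset.mul_sum]
  apply Real.sqrt_le_sqrt
  refine Finset.sum_le_sum fun n _ => ?_
  have hrow : row (A * W) n = euc (Wᵀ.mulVec (row A n)) := by
    ext c
    simp [row, euc, Matrix.mul_apply, Matrix.mulVec, dotProduct,
      Matrix.transpose_apply, mul_comm]
  rw [hrow, ← mul_pow]
  exact pow_le_pow_left₀ (norm_nonneg _) (mulVec_transpose_norm_le W (row A n)) 2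

lemma mem_mul_right {Y : Matrix (Fin N) (Fin C) ℝ} (hY : Y ∈ Mspace e)
    (W : Matrix (Fin C) (Fin C) ℝ) : Y * W ∈ Mspace e := by
  obtain ⟨w, rfl⟩ := hY
  refine ⟨fun m => Matrix.vecMul (w m) W, ?_⟩
  rw [Matrix.sum_mul]
  refine Finset.sum_congr rfl fun m _ => ?_
  ext n c
  simp [Matrix.mul_apply, Matrix.vecMulVec_apply, Matrix.vecMul, dotProduct,
    Finset.mul_sum, mul_assoc]

lemma col_mul (Pm : Matrix (Fin N) (Fin N) ℝ) (Y : Matrix (Fin N) (Fin C) ℝ) (c : Fin C) :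
    col (Pm * Y) c = euc (Pm.mulVec (col Y c)) := by
  ext n
  simp [col, euc, Matrix.mul_apply, Matrix.mulVec, dotProduct]

lemma mulVec_orth_norm_le (Pm : Matrix (Fin N) (Fin N) ℝ)
    (U : Submodule ℝ (EuclideanSpace ℝ (Fin N)))
    {v : EuclideanSpace ℝ (Fin N)} (hv : v ∈ Uᗮ) :
    ‖euc (Pm.mulVec v)‖ ≤
      ‖LinearMap.toContinuousLinearMap ((Matrix.toEuclideanLin Pm).domRestrict Uᗮ)‖ * ‖v‖ := by
  have h := (LinearMap.toContinuousLinearMap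
    ((Matrix.toEuclideanLin Pm).domRestrict Uᗮ)).le_opNorm ⟨v, hv⟩
  simp only [LinearMap.coe_toContinuousLinearMap', LinearMap.domRestrict_apply] at h
  have hx : (Matrix.toEuclideanLin Pm) v = euc (Pm.mulVec v) := rfl
  rw [hx] at h
  exact h

lemma dM_relu_le (he : Orthonormal ℝ e) (hnonneg : ∀ m i, 0 ≤ e m i)
    (X : Matrix (Fin N) (Fin C) ℝ) : dM e (relu X) ≤ dM e X := by
  rw [dM_eq he X]
  refine (Metric.infDist_le_dist_of_mem (relu_mem he hnonneg (projM_mem X))).trans ?_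
  rw [dist_eq_norm]
  exact relu_lip X (projM e X)

lemma dM_mulW_le (he : Orthonormal ℝ e) (X : Matrix (Fin N) (Fin C) ℝ)
    (W : Matrix (Fin C) (Fin C) ℝ) : dM e (X * W) ≤ maxSingularValue W * dM e X := by
  rw [dM_eq he X]
  refine (Metric.infDist_le_dist_of_mem (mem_mul_right (projM_mem X) W)).trans ?_
  rw [dist_eq_norm, ← Matrix.sub_mul]
  exact norm_mul_right_le _ W

lemma dM_P_le (he : Orthonormal ℝ e) (Pm : Matrix (Fin N) (Fin N) ℝ)
    (hinv : ∀ u ∈ Submodule.span ℝ (Set.range e),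
      (WithLp.toLp 2 (Pm.mulVec u) : EuclideanSpace ℝ (Fin N)) ∈ Submodule.span ℝ (Set.range e))
    (lam : ℝ)
    (hlam : lam = ‖LinearMap.toContinuousLinearMap
      ((Matrix.toEuclideanLin Pm).domRestrict (Submodule.span ℝ (Set.range e))ᗮ)‖)
    (X : Matrix (Fin N) (Fin C) ℝ) :
    dM e (Pm * X) ≤ lam * dM e X := by
  have hlam0 : 0 ≤ lam := by rw [hlam]; positivity
  rw [dM_eq he X]
  have hmem : Pm * projM e X ∈ Mspace e :=
    mem_of_cols fun c => (col_mul Pm _ c) ▸ hinv _ (cols_of_mem (projM_mem X) c)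
  refine (Metric.infDist_le_dist_of_mem hmem).trans ?_
  rw [dist_eq_norm, ← Matrix.mul_sub, norm_eq_sqrt_F2, norm_eq_sqrt_F2, F2_eq_sum_cols,
    F2_eq_sum_cols, ← Real.sqrt_sq hlam0, ← Real.sqrt_mul (sq_nonneg _), Finset.mul_sum]
  apply Real.sqrt_le_sqrt
  refine Finset.sum_le_sum fun c _ => ?_
  rw [col_mul, ← mul_pow]
  refine pow_le_pow_left₀ (norm_nonneg _) ?_ 2
  rw [hlam]
  exact mulVec_orth_norm_le Pm _ (sub_projM_orth he X c)

lemma dM_foldl_le (he : Orthonormal ℝ e) (hnonneg : ∀ m i, 0 ≤ e m i)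
    (Ws : List (Matrix (Fin C) (Fin C) ℝ)) :
    ∀ Z : Matrix (Fin N) (Fin C) ℝ,
      dM e (Ws.foldl (fun Z Wh => relu (Z * Wh)) Z) ≤
        (Ws.map maxSingularValue).prod * dM e Z := by
  induction Ws with
  | nil => intro Z; simp
  | cons W Ws ih =>
      intro Z
      have hprod : 0 ≤ (Ws.map maxSingularValue).prod :=
        List.prod_nonneg (by
          intro x hx
          obtain ⟨W', _, rfl⟩ := List.mem_map.mp hx
          exact norm_nonneg _)
      have h1 : dM e (relu (Z * W)) ≤ maxSingularValue W * dM e Z :=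
        (dM_relu_le he hnonneg _).trans (dM_mulW_le he Z W)
      simp only [List.foldl_cons, List.map_cons, List.prod_cons]
      refine (ih (relu (Z * W))).trans ?_
      calc (Ws.map maxSingularValue).prod * dM e (relu (Z * W))
          ≤ (Ws.map maxSingularValue).prod * (maxSingularValue W * dM e Z) :=
            mul_le_mul_of_nonneg_left h1 hprod
        _ = maxSingularValue W * (Ws.map maxSingularValue).prod * dM e Z := by ring

lemma dM_mlp_le (he : Orthonormal ℝ e) (hnonneg : ∀ m i, 0 ≤ e m i)
    (Ws : List (Matrix (Fin C) (Fin C) ℝ)) (Y : Matrix (Fin N) (Fin C) ℝ) :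
    dM e (mlp Ws Y) ≤ (Ws.map maxSingularValue).prod * dM e Y := by
  unfold mlp
  refine (dM_foldl_le he hnonneg Ws (relu Y)).trans ?_
  have hprod : 0 ≤ (Ws.map maxSingularValue).prod :=
    List.prod_nonneg (by
      intro x hx
      obtain ⟨W', _, rfl⟩ := List.mem_map.mp hx
      exact norm_nonneg _)
  exact mul_le_mul_of_nonneg_left (dM_relu_le he hnonneg Y) hprod

end

end DMaux

/-- **Corollary 2 of the paper.** Consider the dynamics
`X^{(l+1)} = f_l(X^{(l)})` where `f_l(X) = σ(⋯σ(σ(P X)W_{l,1})⋯W_{l,H_l})`, `P ∈ ℝ^{N×N}`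
symmetric, `U = span(e 1, …, e M)` invariant under `P` with an orthonormal basis of
entrywise non-negative vectors, `lam` the operator norm of `P` restricted to `Uᗮ`, and
`s = sup_l s_l` (so `s_l ≤ s` for all `l`, `s_l` the product of the largest singular
values of the weights of layer `l`).  Then `d_𝓜(X^{(l)}) ≤ (s·lam)^l · d_𝓜(X^{(0)})` for
all `l`; in particular, if `s·lam < 1` then `d_𝓜(X^{(l)}) → 0` (exponentially) for every
initial value `X^{(0)}`. -/
theorem dM_iterates_le {N C M : ℕ} (hN : 0 < N) (hC : 0 < C) (hM : 0 < M) (hMN : M ≤ N)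
    (P : Matrix (Fin N) (Fin N) ℝ) (hP : P.IsSymm)
    (e : Fin M → EuclideanSpace ℝ (Fin N)) (he : Orthonormal ℝ e)
    (hnonneg : ∀ m i, 0 ≤ e m i)
    (U : Submodule ℝ (EuclideanSpace ℝ (Fin N)))
    (hU : U = Submodule.span ℝ (Set.range e))
    (hinv : ∀ u ∈ U, (WithLp.toLp 2 (P.mulVec u) : EuclideanSpace ℝ (Fin N)) ∈ U)
    (lam : ℝ)
    (hlam : lam = ‖LinearMap.toContinuousLinearMap ((Matrix.toEuclideanLin P).domRestrict Uᗮ)‖)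
    (Ws : ℕ → List (Matrix (Fin C) (Fin C) ℝ)) (hWs : ∀ l, 0 < (Ws l).length)
    (s : ℝ) (hs : ∀ l, ((Ws l).map maxSingularValue).prod ≤ s)
    (X : ℕ → Matrix (Fin N) (Fin C) ℝ)
    (hrec : ∀ l, X (l + 1) = mlp (Ws l) (P * X l)) :
    (∀ l, dM e (X l) ≤ (s * lam) ^ l * dM e (X 0)) ∧
      (s * lam < 1 → Tendsto (fun l => dM e (X l)) atTop (nhds 0)) := by
  subst hU
  have hlam0 : 0 ≤ lam := by rw [hlam]; positivity
  have prod_nonneg : ∀ l, 0 ≤ ((Ws l).map maxSingularValue).prod := by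
    intro l
    refine List.prod_nonneg ?_
    intro x hx
    obtain ⟨W', _, rfl⟩ := List.mem_map.mp hx
    exact norm_nonneg _
  have hs0 : 0 ≤ s := (prod_nonneg 0).trans (hs 0)
  have hsl0 : 0 ≤ s * lam := mul_nonneg hs0 hlam0
  have hstep : ∀ l, dM e (X (l + 1)) ≤ (s * lam) * dM e (X l) := by
    intro l
    rw [hrec l]
    have h1 := DMaux.dM_mlp_le he hnonneg (Ws l) (P * X l)
    have h2 := DMaux.dM_P_le he P hinv lam hlam (X l)
    calc dM e (mlp (Ws l) (P * X l))
        ≤ ((Ws l).map maxSingularValue).prod * dM e (P * X l) := h1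
      _ ≤ ((Ws l).map maxSingularValue).prod * (lam * dM e (X l)) :=
          mul_le_mul_of_nonneg_left h2 (prod_nonneg l)
      _ ≤ s * (lam * dM e (X l)) := by
          refine mul_le_mul_of_nonneg_right (hs l) ?_
          exact mul_nonneg hlam0 Metric.infDist_nonneg
      _ = (s * lam) * dM e (X l) := by ring
  have hmain : ∀ l, dM e (X l) ≤ (s * lam) ^ l * dM e (X 0) := by
    intro l
    induction l with
    | zero => simp
    | succ l ih =>
        refine (hstep l).trans ?_
        calc (s * lam) * dM e (X l) ≤ (s * lam) * ((s * lam) ^ l * dM e (X 0)) :=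
              mul_le_mul_of_nonneg_left ih hsl0
          _ = (s * lam) ^ (l + 1) * dM e (X 0) := by ring
  refine ⟨hmain, fun hlt => ?_⟩
  have h0 : Tendsto (fun l : ℕ => (s * lam) ^ l * dM e (X 0)) atTop (nhds 0) := by
    have := tendsto_pow_atTop_nhds_zero_of_lt_one hsl0 hlt
    simpa using this.mul_const (dM e (X 0))
  exact squeeze_zero (fun l => Metric.infDist_nonneg) hmain h0
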